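/- For all i, j, m ∈ ℕ, 𝔠̄_{ijm} · ∫_0^{2π} cos((i+2)·t)·cos((j+2)·t)·cos((m+2)·t) dt = 0; that is, the quadratic nonlinearity of the Yang–Mills resonant system is non-resonant, its average along the linear flow vanishing identically. -/
import Mathlib


open MeasureTheory

/-- Gegenbauer (ultraspherical) polynomial `C_n^{(2)}` of degree `n` with parameter `2`,
as a real-valued function. -/
noncomputable def geg (n : ℕ) (y : ℝ) : ℝ :=
  ∑ k ∈ Finset.range (n / 2 + 1),
    (-1:ℝ) ^ k *
      ((Nat.factorial (n - k + 1) : ℝ) /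
        ((Nat.factorial k : ℝ) * (Nat.factorial (n - 2 * k) : ℝ))) *
      (2 * y) ^ (n - 2 * k)

/-- The normalization constant `𝔴_n = √(8/π)/√((n+1)(n+3))`. -/
noncomputable def wYM (n : ℕ) : ℝ :=
  Real.sqrt (8 / Real.pi) / Real.sqrt (((n:ℝ) + 1) * ((n:ℝ) + 3))

/-- The quadratic Fourier coefficients `𝔠̄_{ijm}` of the spherically symmetric equivariant
Yang–Mills equation on the Einstein cylinder. -/
noncomputable def cbar (i j m : ℕ) : ℝ :=
  wYM i * wYM j * wYM m *
    ∫ y in (-1:ℝ)..1, geg i y * geg j y * geg m y * (1 - y ^ 2) ^ ((3:ℝ) / 2)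

/-- The cubic Fourier coefficients `𝔠_{ijkm}` of the spherically symmetric equivariant
Yang–Mills equation on the Einstein cylinder. -/
noncomputable def cquad (i j k m : ℕ) : ℝ :=
  wYM i * wYM j * wYM k * wYM m *
    ∫ y in (-1:ℝ)..1, geg i y * geg j y * geg k y * geg m y * (1 - y ^ 2) ^ ((5:ℝ) / 2)

section YMaux
open Real

lemma intCos (k a b : ℝ) (hk : k ≠ 0) :
    ∫ t in a..b, Real.cos (k*t) = (Real.sin (k*b) - Real.sin (k*a))/k := by
  rw [intervalIntegral.integral_comp_mul_left _ hk, integral_cos, smul_eq_mul]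
  ring

lemma sinIntPi (k : ℤ) : Real.sin ((k:ℝ)*π) = 0 := Real.sin_int_mul_pi k

lemma cosPiZero (k : ℤ) (hk : k ≠ 0) : ∫ θ in (0:ℝ)..π, Real.cos (k*θ) = 0 := by
  rw [intCos _ _ _ (by exact_mod_cast hk)]
  rw [show (k:ℝ)*π = ((k:ℤ):ℝ)*π from rfl, sinIntPi]
  simp

lemma cos2PiZero (k : ℤ) (hk : k ≠ 0) : ∫ θ in (0:ℝ)..(2*π), Real.cos (k*θ) = 0 := by
  rw [intCos _ _ _ (by exact_mod_cast hk)]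
  rw [show (k:ℝ)*(2*π) = ((2*k:ℤ):ℝ)*π by push_cast; ring, sinIntPi]
  simp

lemma cos3 (x y z : ℝ) : Real.cos x * Real.cos y * Real.cos z =
    (Real.cos (x+y+z) + Real.cos (x+y-z) + Real.cos (x-y+z) + Real.cos (x-y-z))/4 := by
  simp only [Real.cos_add, Real.cos_sub]
  ring

lemma triple2PiZero (a b c : ℤ) (h1 : a+b+c ≠ 0) (h2 : a+b-c ≠ 0) (h3 : a-b+c ≠ 0)
    (h4 : a-b-c ≠ 0) :
    ∫ t in (0:ℝ)..(2*π), Real.cos (a*t) * Real.cos (b*t) * Real.cos (c*t) = 0 := by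
  have key : ∀ t : ℝ, Real.cos (a*t) * Real.cos (b*t) * Real.cos (c*t) =
      (Real.cos (((a+b+c:ℤ):ℝ)*t) + Real.cos (((a+b-c:ℤ):ℝ)*t) + Real.cos (((a-b+c:ℤ):ℝ)*t)
        + Real.cos (((a-b-c:ℤ):ℝ)*t))/4 := by
    intro t
    rw [cos3]
    push_cast
    ring_nf
  rw [intervalIntegral.integral_congr (fun t _ => key t)]
  have ic : ∀ k : ℤ, IntervalIntegrable (fun t => Real.cos ((k:ℝ)*t)) volume 0 (2*π) :=
    fun k => (Real.continuous_cos.comp (continuous_const.mul continuous_id)).intervalIntegrable _ _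
  simp only [div_eq_mul_inv]
  rw [intervalIntegral.integral_mul_const,
    intervalIntegral.integral_add (((ic _).add (ic _)).add (ic _)) (ic _),
    intervalIntegral.integral_add ((ic _).add (ic _)) (ic _),
    intervalIntegral.integral_add (ic _) (ic _),
    cos2PiZero _ h1, cos2PiZero _ h2, cos2PiZero _ h3, cos2PiZero _ h4]
  ring

lemma contInt (f : ℝ → ℝ) (hf : Continuous f) (a b : ℝ) :
    IntervalIntegrable f volume a b := hf.intervalIntegrable a b

lemma orthKey : ∀ (r : ℕ) (M : ℤ), (r:ℤ) + 2 ≤ M →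
    (∫ θ in (0:ℝ)..π, Real.cos θ ^ r * Real.sin θ * Real.sin ((M:ℝ)*θ)) = 0 := by
  intro r
  induction r with
  | zero =>
    intro M hM
    have key : ∀ θ : ℝ, Real.cos θ ^ 0 * Real.sin θ * Real.sin ((M:ℝ)*θ) =
        (Real.cos (((M-1:ℤ):ℝ)*θ) - Real.cos (((M+1:ℤ):ℝ)*θ))/2 := by
      intro θ
      push_cast
      rw [show ((M:ℝ)-1)*θ = (M:ℝ)*θ - θ by ring, show ((M:ℝ)+1)*θ = (M:ℝ)*θ + θ by ring,
        Real.cos_sub, Real.cos_add]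
      ring
    rw [intervalIntegral.integral_congr (fun θ _ => key θ)]
    simp only [div_eq_mul_inv]
    rw [intervalIntegral.integral_mul_const,
      intervalIntegral.integral_sub
        (contInt (fun θ : ℝ => Real.cos (((M-1:ℤ):ℝ)*θ)) (by continuity) _ _)
        (contInt (fun θ : ℝ => Real.cos (((M+1:ℤ):ℝ)*θ)) (by continuity) _ _),
      cosPiZero _ (by omega), cosPiZero _ (by omega)]
    ring
  | succ r ih =>
    intro M hM
    have key : ∀ θ : ℝ, Real.cos θ ^ (r+1) * Real.sin θ * Real.sin ((M:ℝ)*θ) =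
        (Real.cos θ ^ r * Real.sin θ * Real.sin (((M+1:ℤ):ℝ)*θ)
          + Real.cos θ ^ r * Real.sin θ * Real.sin (((M-1:ℤ):ℝ)*θ))/2 := by
      intro θ
      push_cast
      rw [show ((M:ℝ)+1)*θ = (M:ℝ)*θ + θ by ring, show ((M:ℝ)-1)*θ = (M:ℝ)*θ - θ by ring,
        Real.sin_add, Real.sin_sub]
      ring
    have c1 : ∀ k : ℤ, Continuous (fun θ : ℝ =>
        Real.cos θ ^ r * Real.sin θ * Real.sin ((k:ℝ)*θ)) := fun k => by
      continuity
    rw [intervalIntegral.integral_congr (fun θ _ => key θ)]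
    simp only [div_eq_mul_inv]
    rw [intervalIntegral.integral_mul_const,
      intervalIntegral.integral_add (contInt _ (c1 _) _ _) (contInt _ (c1 _) _ _),
      ih (M+1) (by omega), ih (M-1) (by omega)]
    ring

noncomputable def HH (n : ℕ) (θ : ℝ) : ℝ :=
  ((n:ℝ)+3)/2 * Real.sin (((n:ℝ)+1)*θ) - ((n:ℝ)+1)/2 * Real.sin (((n:ℝ)+3)*θ)

lemma Hrec (n : ℕ) (θ : ℝ) :
    ((n:ℝ)+2) * HH (n+2) θ = 2*((n:ℝ)+3) * Real.cos θ * HH (n+1) θ - ((n:ℝ)+4) * HH n θ := by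
  unfold HH
  push_cast
  rw [show ((n:ℝ)+2+1)*θ = ((n:ℝ)+1)*θ + θ + θ by ring,
    show ((n:ℝ)+2+3)*θ = ((n:ℝ)+1)*θ + θ + θ + θ + θ by ring,
    show ((n:ℝ)+1+1)*θ = ((n:ℝ)+1)*θ + θ by ring,
    show ((n:ℝ)+1+3)*θ = ((n:ℝ)+1)*θ + θ + θ + θ by ring,
    show ((n:ℝ)+3)*θ = ((n:ℝ)+1)*θ + θ + θ by ring]
  simp only [Real.sin_add, Real.cos_add]
  linear_combination (((6:ℝ) + 5*n + n^2) * Real.cos (((n:ℝ)+1)*θ) * Real.sin θ * Real.cos θ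
    + (-6 - 7*(n:ℝ)/2 - (n:ℝ)^2/2) * Real.sin (((n:ℝ)+1)*θ)
    + (3 + 5*(n:ℝ)/2 + (n:ℝ)^2/2) * Real.sin (((n:ℝ)+1)*θ) * Real.cos θ^2
    + (-3 - 5*(n:ℝ)/2 - (n:ℝ)^2/2) * Real.sin (((n:ℝ)+1)*θ) * Real.sin θ^2)
    * (Real.sin_sq_add_cos_sq θ)

noncomputable def P1 (n : ℕ) (y : ℝ) (k : ℕ) : ℝ :=
  (-1:ℝ)^k * ((((n:ℝ)+2) - 2*k) * (((n:ℝ)+3) * (Nat.factorial (n+2-k) : ℝ)) /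
    ((Nat.factorial k : ℝ) * (Nat.factorial (n+2-2*k) : ℝ))) * (2*y)^(n+2-2*k)

noncomputable def P2 (n : ℕ) (y : ℝ) (k : ℕ) : ℝ :=
  (-1:ℝ)^k * ((((n:ℝ)+4) * k * (Nat.factorial (n+2-k) : ℝ)) /
    ((Nat.factorial k : ℝ) * (Nat.factorial (n+2-2*k) : ℝ))) * (2*y)^(n+2-2*k)

lemma sumP1 (n : ℕ) (y : ℝ) :
    ∑ k ∈ Finset.range ((n+2)/2 + 1), P1 n y k = 2*((n:ℝ)+3)*y*geg (n+1) y := by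
  rw [geg, Finset.mul_sum]
  rw [← Finset.sum_subset (Finset.range_subset_range.2 (show (n+1)/2+1 ≤ (n+2)/2+1 by omega))]
  · apply Finset.sum_congr rfl
    intro k hk
    have h2k : 2*k ≤ n+1 := by
      have := Finset.mem_range.1 hk; omega
    unfold P1
    have hf1 : n+2-k = (n+1-k+1) := by omega
    have hf2 : n+2-2*k = (n+1-2*k)+1 := by omega
    have hc1 : ((n+1-2*k : ℕ) : ℝ) = (n:ℝ)+1-2*k := by
      rw [Nat.cast_sub h2k]; push_cast; ring
    rw [hf1, hf2, Nat.factorial_succ (n+1-2*k), pow_succ]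
    push_cast [hc1]
    have hx : (n:ℝ)+1-2*k+1 ≠ 0 := by
      have : (2*k:ℝ) ≤ (n:ℝ)+1 := by exact_mod_cast h2k
      nlinarith
    field_simp
    ring
  · intro k hk hnk
    have hk1 : k ≤ (n+2)/2 := by have := Finset.mem_range.1 hk; omega
    have hk2 : (n+1)/2 + 1 ≤ k := by
      by_contra h
      exact hnk (Finset.mem_range.2 (by omega))
    have : 2*k = n+2 := by omega
    unfold P1
    have : ((n:ℝ)+2) - 2*k = 0 := by
      have : ((2*k : ℕ):ℝ) = ((n+2 : ℕ):ℝ) := by rw [this]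
      push_cast at this
      linarith
    rw [this]
    ring

lemma sumP2 (n : ℕ) (y : ℝ) :
    ∑ k ∈ Finset.range ((n+2)/2 + 1), P2 n y k = -(((n:ℝ)+4) * geg n y) := by
  have hr : (n+2)/2 + 1 = (n/2 + 1) + 1 := by omega
  rw [hr, Finset.sum_range_succ']
  have h0 : P2 n y 0 = 0 := by unfold P2; simp
  rw [h0, add_zero, geg, Finset.mul_sum, ← Finset.sum_neg_distrib]
  apply Finset.sum_congr rfl
  intro k hk
  have h2k : 2*k ≤ n := by have := Finset.mem_range.1 hk; omega
  unfold P2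
  have hf1 : n+2-(k+1) = (n-k+1) := by omega
  have hf2 : n+2-2*(k+1) = n-2*k := by omega
  rw [hf1, hf2, Nat.factorial_succ k]
  push_cast
  have hk1 : (k:ℝ)+1 ≠ 0 := by positivity
  field_simp
  ring

lemma gegRec (n : ℕ) (y : ℝ) :
    ((n:ℝ)+2) * geg (n+2) y = 2*((n:ℝ)+3)*y*geg (n+1) y - ((n:ℝ)+4) * geg n y := by
  rw [← sumP1, sub_eq_add_neg, ← sumP2]
  have : ((n:ℝ)+2) * geg (n+2) y = ∑ k ∈ Finset.range ((n+2)/2 + 1), (P1 n y k + P2 n y k) := by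
    rw [geg, Finset.mul_sum]
    apply Finset.sum_congr rfl
    intro k hk
    have h2k : 2*k ≤ n+2 := by
      have := Finset.mem_range.1 hk; omega
    unfold P1 P2
    have hf1 : n+2-k+1 = (n+2-k)+1 := rfl
    rw [hf1, Nat.factorial_succ (n+2-k)]
    have hc1 : ((n+2-k : ℕ) : ℝ) = (n:ℝ)+2-k := by
      rw [Nat.cast_sub (by omega)]; push_cast; ring
    have hc2 : ((n+2-2*k : ℕ) : ℝ) = (n:ℝ)+2-2*k := by
      rw [Nat.cast_sub h2k]; push_cast; ring
    push_cast [hc1]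
    field_simp
    ring
  rw [this, Finset.sum_add_distrib]


lemma geg0 (y : ℝ) : geg 0 y = 1 := by simp [geg]

lemma geg1 (y : ℝ) : geg 1 y = 4*y := by
  norm_num [geg, Finset.sum_range_succ, Nat.factorial]
  ring

lemma gegTrig (n : ℕ) (θ : ℝ) :
    2 * Real.sin θ^3 * geg n (Real.cos θ) = HH n θ := by
  induction n using Nat.twoStepInduction with
  | zero =>
    rw [geg0]
    unfold HH
    norm_num
    rw [Real.sin_three_mul]
    ring
  | one =>
    rw [geg1]
    unfold HH
    norm_num
    rw [show (4:ℝ)*θ = 2*(2*θ) by ring, Real.sin_two_mul (2*θ), Real.sin_two_mul,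
      Real.cos_two_mul]
    linear_combination (8*Real.sin θ*Real.cos θ) * (Real.sin_sq_add_cos_sq θ)
  | more n ih0 ih1 =>
    have h2 : ((n:ℝ)+2) ≠ 0 := by positivity
    have key : ((n:ℝ)+2) * (2 * Real.sin θ^3 * geg (n+2) (Real.cos θ))
        = ((n:ℝ)+2) * HH (n+2) θ := by
      linear_combination 2*Real.sin θ^3 * (gegRec n (Real.cos θ)) - Hrec n θ
        + 2*((n:ℝ)+3)*Real.cos θ * ih1 - ((n:ℝ)+4) * ih0
    exact mul_left_cancel₀ h2 key

lemma gegCont (n : ℕ) : Continuous (fun y : ℝ => geg n y) := by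
  unfold geg
  apply continuous_finset_sum
  intro k _
  continuity

lemma HHCont (m : ℕ) : Continuous (fun θ : ℝ => HH m θ) := by
  unfold HH
  continuity

noncomputable def gcoef (n k : ℕ) : ℝ :=
  (-1:ℝ)^k * ((Nat.factorial (n-k+1) : ℝ) /
    ((Nat.factorial k : ℝ) * (Nat.factorial (n-2*k) : ℝ)))

lemma orthHH (e m : ℕ) (h : e + 1 ≤ m) :
    (∫ θ in (0:ℝ)..π, Real.cos θ ^ e * Real.sin θ * HH m θ) = 0 := by
  have key : ∀ θ : ℝ, Real.cos θ ^ e * Real.sin θ * HH m θ =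
      ((m:ℝ)+3)/2 * (Real.cos θ ^ e * Real.sin θ * Real.sin (((m+1:ℤ):ℝ)*θ))
      - ((m:ℝ)+1)/2 * (Real.cos θ ^ e * Real.sin θ * Real.sin (((m+3:ℤ):ℝ)*θ)) := by
    intro θ
    unfold HH
    push_cast
    ring
  rw [intervalIntegral.integral_congr (fun θ _ => key θ)]
  have c1 : ∀ k : ℤ, Continuous (fun θ : ℝ =>
      Real.cos θ ^ e * Real.sin θ * Real.sin ((k:ℝ)*θ)) := fun k => by continuity
  rw [intervalIntegral.integral_sub
      (((contInt _ (c1 (m+1)) _ _).const_mul _))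
      (((contInt _ (c1 (m+3)) _ _).const_mul _)),
    intervalIntegral.integral_const_mul, intervalIntegral.integral_const_mul,
    orthKey e (m+1) (by omega), orthKey e (m+3) (by omega)]
  ring

lemma polyOrth (i j m : ℕ) (h : i + j + 1 ≤ m) :
    (∫ θ in (0:ℝ)..π, geg i (Real.cos θ) * geg j (Real.cos θ) * Real.sin θ * HH m θ) = 0 := by
  have expand : ∀ θ : ℝ, geg i (Real.cos θ) * geg j (Real.cos θ) * Real.sin θ * HH m θ
      = ∑ k ∈ Finset.range (i/2+1), ∑ l ∈ Finset.range (j/2+1),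
        (gcoef i k * gcoef j l * 2^(i-2*k) * 2^(j-2*l)) *
          (Real.cos θ ^ ((i-2*k)+(j-2*l)) * Real.sin θ * HH m θ) := by
    intro θ
    rw [geg, geg, Finset.sum_mul_sum]
    rw [Finset.sum_mul, Finset.sum_mul]
    apply Finset.sum_congr rfl
    intro k _
    rw [Finset.sum_mul, Finset.sum_mul]
    apply Finset.sum_congr rfl
    intro l _
    rw [gcoef, gcoef, mul_pow, mul_pow, pow_add]
    ring
  rw [intervalIntegral.integral_congr (fun θ _ => expand θ)]
  have cc : ∀ (c : ℝ) (e : ℕ), Continuous (fun θ : ℝ =>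
      c * (Real.cos θ ^ e * Real.sin θ * HH m θ)) := fun c e => by
    apply Continuous.mul continuous_const
    exact ((Real.continuous_cos.pow e).mul Real.continuous_sin).mul (HHCont m)
  rw [intervalIntegral.integral_finset_sum (fun k _ =>
    contInt _ (continuous_finset_sum _ (fun l _ => cc _ _)) _ _)]
  apply Finset.sum_eq_zero
  intro k _
  rw [intervalIntegral.integral_finset_sum (fun l _ => contInt _ (cc _ _) _ _)]
  apply Finset.sum_eq_zero
  intro l _
  rw [intervalIntegral.integral_const_mul, orthHH _ _ (by
    have h1 : i - 2*k ≤ i := Nat.sub_le _ _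
    have h2 : j - 2*l ≤ j := Nat.sub_le _ _
    omega)]
  ring

lemma intSub (G : ℝ → ℝ) (hG : Continuous G) :
    ∫ y in (-1:ℝ)..1, G y = ∫ θ in (0:ℝ)..π, Real.sin θ * G (Real.cos θ) := by
  have h := intervalIntegral.integral_comp_smul_deriv (f := Real.cos)
    (f' := fun θ => -Real.sin θ) (a := 0) (b := π)
    (fun x _ => Real.hasDerivAt_cos x) (by continuity : Continuous fun θ : ℝ => -Real.sin θ).continuousOn hG
  rw [Real.cos_zero, Real.cos_pi] at h
  have h2 : (∫ x in (0:ℝ)..π, (fun θ => -Real.sin θ) x • (G ∘ Real.cos) x)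
      = - ∫ θ in (0:ℝ)..π, Real.sin θ * G (Real.cos θ) := by
    rw [← intervalIntegral.integral_neg]
    apply intervalIntegral.integral_congr
    intro θ _
    simp [smul_eq_mul]
  have h3 : (∫ y in (1:ℝ)..(-1), G y) = - ∫ y in (-1:ℝ)..1, G y :=
    intervalIntegral.integral_symm _ _
  rw [h2, h3] at h
  linarith

lemma gegIntZero (i j m : ℕ) (h : i + j + 2 ≤ m) :
    (∫ y in (-1:ℝ)..1, geg i y * geg j y * geg m y * (1 - y^2) ^ ((3:ℝ)/2)) = 0 := by
  have hG : Continuous (fun y : ℝ => geg i y * geg j y * geg m y * (1 - y^2) ^ ((3:ℝ)/2)) := by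
    apply Continuous.mul (((gegCont i).mul (gegCont j)).mul (gegCont m))
    exact (Real.continuous_rpow_const (by norm_num)).comp (by continuity)
  rw [intSub _ hG]
  have key : ∀ θ ∈ Set.uIcc (0:ℝ) π,
      Real.sin θ * (geg i (Real.cos θ) * geg j (Real.cos θ) * geg m (Real.cos θ)
        * (1 - Real.cos θ^2) ^ ((3:ℝ)/2))
      = (geg i (Real.cos θ) * geg j (Real.cos θ) * Real.sin θ * HH m θ) * (1/2) := by
    intro θ hθ
    rw [Set.uIcc_of_le Real.pi_pos.le] at hθ
    have hs : 0 ≤ Real.sin θ := Real.sin_nonneg_of_nonneg_of_le_pi hθ.1 hθ.2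
    have hw : ((1:ℝ) - Real.cos θ^2) ^ ((3:ℝ)/2) = Real.sin θ ^ 3 := by
      rw [show (1:ℝ) - Real.cos θ^2 = Real.sin θ^2 by
        nlinarith [Real.sin_sq_add_cos_sq θ]]
      rw [← Real.rpow_natCast (Real.sin θ) 2, ← Real.rpow_mul hs,
        show ((2:ℕ):ℝ) * ((3:ℝ)/2) = ((3:ℕ):ℝ) by norm_num,
        Real.rpow_natCast]
    rw [hw]
    linear_combination (geg i (Real.cos θ) * geg j (Real.cos θ) * Real.sin θ / 2) * gegTrig m θ
  rw [intervalIntegral.integral_congr key, intervalIntegral.integral_mul_const,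
    polyOrth i j m (by omega), zero_mul]

lemma cbarCyc (i j m : ℕ) : cbar i j m = cbar j m i := by
  unfold cbar
  have : (∫ y in (-1:ℝ)..1, geg i y * geg j y * geg m y * (1 - y ^ 2) ^ ((3:ℝ) / 2))
      = ∫ y in (-1:ℝ)..1, geg j y * geg m y * geg i y * (1 - y ^ 2) ^ ((3:ℝ) / 2) :=
    intervalIntegral.integral_congr (fun y _ => by ring)
  rw [this]
  ring

lemma cbarZero (i j m : ℕ) (h : i + j + 2 ≤ m) : cbar i j m = 0 := by
  unfold cbar
  rw [gegIntZero i j m h, mul_zero]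


end YMaux

/-- Non-resonance of the quadratic Yang–Mills nonlinearity: the time average of each
quadratic interaction along the linear flow vanishes. -/
theorem YM_quadratic_nonresonant (i j m : ℕ) :
    cbar i j m *
      ∫ t in (0:ℝ)..(2 * Real.pi),
        Real.cos (((i:ℝ) + 2) * t) * Real.cos (((j:ℝ) + 2) * t) *
          Real.cos (((m:ℝ) + 2) * t) = 0 := by
  by_cases h1 : m = i + j + 2
  · rw [cbarZero i j m (by omega), zero_mul]
  by_cases h2 : i = j + m + 2
  · rw [cbarCyc, cbarZero j m i (by omega), zero_mul]
  by_cases h3 : j = i + m + 2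
  · rw [cbarCyc, cbarCyc, cbarZero m i j (by omega), zero_mul]
  · have key := triple2PiZero ((i:ℤ)+2) ((j:ℤ)+2) ((m:ℤ)+2)
      (by omega) (by omega) (by omega) (by omega)
    push_cast at key
    rw [key, mul_zero]
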